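/- arXiv:1806.09618 — 3 statements merged into one kernel-verified Lean document; each statement's English description precedes it below -/
import Mathlib

section
/- Let σ > 0 be a real number, let N be a positive integer, let λ : ℕ → ℝ satisfy λ_t > 0 for all t, and let η : ℕ → ℝ satisfy Σ_t η_t² < ∞. Define h*_t = λ_t·η_t/(λ_t + σ²/N). Then both series Σ_t (η_t − h*_t)² and Σ_t (h*_t)²/λ_t converge, and for every h : ℕ → ℝ for which the series Σ_t (η_t − h_t)² and Σ_t h_t²/λ_t both converge, one has (N/(2σ²))·Σ_t (η_t − h*_t)² + (1/2)·Σ_t (h*_t)²/λ_t ≤ (N/(2σ²))·Σ_t (η_t − h_t)² + (1/2)·Σ_t h_t²/λ_t, with equality if and only if h_t = h*_t for all t. -/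
/-!
Coordinatewise, completing the square gives
`(η - x)²/c + x²/λ = (η - x*)²/c + x*²/λ + (1/c + 1/λ)(x - x*)²` with `x* = λη/(λ + c)`, `c = σ²/N`.
Summing over `t`, the functional at `h` exceeds its value at `h*` by the series of the nonnegative
remainders, which vanishes exactly when `h = h*`. Summability of the two series at `h*` follows
from `(η - h*)² ≤ η²` and `h*²/λ ≤ η²/c`.
-/

lemma sq_sub_div_add_sq_div_eq {c l e x : ℝ} (hc : c ≠ 0) (hl : l ≠ 0) (hlc : l + c ≠ 0) :
    (e - x) ^ 2 / c + x ^ 2 / l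
      = (e - l * e / (l + c)) ^ 2 / c + (l * e / (l + c)) ^ 2 / l
        + (1 / c + 1 / l) * (x - l * e / (l + c)) ^ 2 := by
  field_simp
  ring

section Ridge

variable {ι : Type*} {c : ℝ} {lam eta h : ι → ℝ}

/-- Twice the paper's functional `J`, with fidelity weight `1 / c` where `c = σ² / N`. -/
noncomputable def ridgeCost (c : ℝ) (lam eta h : ι → ℝ) : ℝ :=
  (∑' t, (eta t - h t) ^ 2) / c + ∑' t, h t ^ 2 / lam t

noncomputable def ridgeMin (c : ℝ) (lam eta : ι → ℝ) (t : ι) : ℝ :=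
  lam t * eta t / (lam t + c)

lemma summable_sq_sub_ridgeMin (hc : 0 < c) (hlam : ∀ t, 0 < lam t)
    (heta : Summable fun t => eta t ^ 2) :
    Summable fun t => (eta t - ridgeMin c lam eta t) ^ 2 := by
  refine heta.of_nonneg_of_le (fun t => sq_nonneg _) fun t => ?_
  have hlc : 0 < lam t + c := add_pos (hlam t) hc
  have hfactor : eta t - ridgeMin c lam eta t = c / (lam t + c) * eta t := by
    unfold ridgeMin
    field_simp
    ring
  have hshrink : (c / (lam t + c)) ^ 2 ≤ 1 := by
    rw [div_pow, div_le_one (by positivity)]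
    nlinarith [hlam t]
  rw [hfactor, mul_pow]
  exact mul_le_of_le_one_left (sq_nonneg _) hshrink

lemma summable_ridgeMin_sq_div (hc : 0 < c) (hlam : ∀ t, 0 < lam t)
    (heta : Summable fun t => eta t ^ 2) :
    Summable fun t => ridgeMin c lam eta t ^ 2 / lam t := by
  refine (heta.div_const c).of_nonneg_of_le (fun t => div_nonneg (sq_nonneg _) (hlam t).le)
    fun t => ?_
  have hl := hlam t
  have hfactor : ridgeMin c lam eta t ^ 2 / lam t = lam t / (lam t + c) ^ 2 * eta t ^ 2 := by
    unfold ridgeMin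
    field_simp
  have hweight : lam t / (lam t + c) ^ 2 ≤ 1 / c := by
    rw [div_le_div_iff₀ (by positivity) hc]
    nlinarith
  calc ridgeMin c lam eta t ^ 2 / lam t = lam t / (lam t + c) ^ 2 * eta t ^ 2 := hfactor
    _ ≤ 1 / c * eta t ^ 2 := by gcongr
    _ = eta t ^ 2 / c := one_div_mul_eq_div c _

lemma hasSum_ridgeCost (hA : Summable fun t => (eta t - h t) ^ 2)
    (hB : Summable fun t => h t ^ 2 / lam t) :
    HasSum (fun t => (eta t - h t) ^ 2 / c + h t ^ 2 / lam t) (ridgeCost c lam eta h) :=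
  (hA.hasSum.div_const c).add hB.hasSum

lemma hasSum_ridgeCost_sub_ridgeCost_ridgeMin (hc : 0 < c) (hlam : ∀ t, 0 < lam t)
    (heta : Summable fun t => eta t ^ 2) (hA : Summable fun t => (eta t - h t) ^ 2)
    (hB : Summable fun t => h t ^ 2 / lam t) :
    HasSum (fun t => (1 / c + 1 / lam t) * (h t - ridgeMin c lam eta t) ^ 2)
      (ridgeCost c lam eta h - ridgeCost c lam eta (ridgeMin c lam eta)) := by
  refine ((hasSum_ridgeCost hA hB).sub (hasSum_ridgeCost (summable_sq_sub_ridgeMin hc hlam heta)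
    (summable_ridgeMin_sq_div hc hlam heta))).congr_fun fun t => ?_
  rw [sq_sub_div_add_sq_div_eq hc.ne' (hlam t).ne' (add_pos (hlam t) hc).ne', ridgeMin]
  ring

lemma ridgeCost_ridgeMin_le (hc : 0 < c) (hlam : ∀ t, 0 < lam t)
    (heta : Summable fun t => eta t ^ 2) (hA : Summable fun t => (eta t - h t) ^ 2)
    (hB : Summable fun t => h t ^ 2 / lam t) :
    ridgeCost c lam eta (ridgeMin c lam eta) ≤ ridgeCost c lam eta h := by
  have hrem := hasSum_ridgeCost_sub_ridgeCost_ridgeMin hc hlam heta hA hB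
  have hnonneg := hrem.nonneg fun t => by have := hlam t; positivity
  linarith

lemma ridgeCost_ridgeMin_eq_iff (hc : 0 < c) (hlam : ∀ t, 0 < lam t)
    (heta : Summable fun t => eta t ^ 2) (hA : Summable fun t => (eta t - h t) ^ 2)
    (hB : Summable fun t => h t ^ 2 / lam t) :
    ridgeCost c lam eta (ridgeMin c lam eta) = ridgeCost c lam eta h ↔
      h = ridgeMin c lam eta := by
  have hrem := hasSum_ridgeCost_sub_ridgeCost_ridgeMin hc hlam heta hA hB
  have hweight : ∀ t, 0 < 1 / c + 1 / lam t := fun t => by have := hlam t; positivity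
  rw [eq_comm, ← sub_eq_zero]
  refine Iff.trans ⟨fun hzero => hzero ▸ hrem, hrem.unique⟩ ?_
  rw [hasSum_zero_iff_of_nonneg fun t => mul_nonneg (hweight t).le (sq_nonneg _)]
  simp only [funext_iff, Pi.zero_apply, mul_eq_zero, (hweight _).ne', false_or,
    pow_eq_zero_iff two_ne_zero, sub_eq_zero]

end Ridge

/-- The coordinatewise minimizer `h*_t = λ_t·η_t/(λ_t + σ²/N)` globally minimizes the
regularized functional `J[h] = (N/(2σ²))·Σ_t (η_t − h_t)² + (1/2)·Σ_t h_t²/λ_t`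
over all `h` for which both series converge, and uniquely so. -/
theorem stmt_1 (sigma : ℝ) (hsigma : 0 < sigma) (N : ℕ) (hN : 0 < N)
    (lam : ℕ → ℝ) (hlam : ∀ t, 0 < lam t)
    (eta : ℕ → ℝ) (heta : Summable (fun t => (eta t) ^ 2))
    (hstar : ℕ → ℝ)
    (hhstar : ∀ t, hstar t = lam t * eta t / (lam t + sigma ^ 2 / N)) :
    Summable (fun t => (eta t - hstar t) ^ 2) ∧
    Summable (fun t => (hstar t) ^ 2 / lam t) ∧
    ∀ h : ℕ → ℝ,
      Summable (fun t => (eta t - h t) ^ 2) →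
      Summable (fun t => (h t) ^ 2 / lam t) →
      (((N : ℝ) / (2 * sigma ^ 2)) * (∑' t, (eta t - hstar t) ^ 2)
          + (1 / 2) * (∑' t, (hstar t) ^ 2 / lam t)
        ≤ ((N : ℝ) / (2 * sigma ^ 2)) * (∑' t, (eta t - h t) ^ 2)
          + (1 / 2) * (∑' t, (h t) ^ 2 / lam t)) ∧
      (((N : ℝ) / (2 * sigma ^ 2)) * (∑' t, (eta t - hstar t) ^ 2)
          + (1 / 2) * (∑' t, (hstar t) ^ 2 / lam t)
        = ((N : ℝ) / (2 * sigma ^ 2)) * (∑' t, (eta t - h t) ^ 2)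
          + (1 / 2) * (∑' t, (h t) ^ 2 / lam t)
        ↔ ∀ t, h t = hstar t) := by
  have hc : 0 < sigma ^ 2 / N := by positivity
  obtain rfl : hstar = ridgeMin (sigma ^ 2 / N) lam eta := funext hhstar
  have hJ : ∀ f : ℕ → ℝ, (N : ℝ) / (2 * sigma ^ 2) * (∑' t, (eta t - f t) ^ 2)
      + 1 / 2 * (∑' t, f t ^ 2 / lam t) = ridgeCost (sigma ^ 2 / N) lam eta f / 2 := by
    intro f
    unfold ridgeCost
    field_simp
  refine ⟨summable_sq_sub_ridgeMin hc hlam heta, summable_ridgeMin_sq_div hc hlam heta,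
    fun h hA hB => ?_⟩
  rw [hJ, hJ, div_le_div_iff_of_pos_right two_pos, div_left_inj' two_ne_zero, ← funext_iff]
  exact ⟨ridgeCost_ridgeMin_le hc hlam heta hA hB, ridgeCost_ridgeMin_eq_iff hc hlam heta hA hB⟩
end

section
/- Let σ > 0 be a real number, let λ : ℕ → ℝ satisfy λ_t > 0 for all t, and let η : ℕ → ℝ satisfy Σ_t η_t² < ∞. For each positive integer N define H_N : ℕ → ℝ by H_N(t) = λ_t·η_t/(λ_t + σ²/N). Then Σ_t (H_N(t) − η_t)² converges for every N, and Σ_t (H_N(t) − η_t)² → 0 as N → ∞; i.e., H_N converges to η in the ℓ² sense. -/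
/-! The error of the shrunk coefficient is `η_t - H_N(t) = (σ²/N)/(λ_t + σ²/N) · η_t`, a factor in
`[0, 1]` times `η_t`. So each squared error is dominated by the summable `η_t²`, and it tends to `0`
as `N → ∞` since `λ_t > 0`; dominated convergence for series (Tannery's theorem) gives the
`ℓ²` convergence. -/

open Filter Topology

lemma mul_div_add_sub_sq_le {l c : ℝ} (hl : 0 ≤ l) (hc : 0 ≤ c) (e : ℝ) :
    (l * e / (l + c) - e) ^ 2 ≤ e ^ 2 := by
  rcases (add_nonneg hl hc).eq_or_lt with hlc | hlc
  · simp [← hlc]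
  have hshrink : l * e / (l + c) - e = -(c / (l + c) * e) := by
    field_simp
    ring
  have hfactor : (c / (l + c)) ^ 2 ≤ 1 :=
    pow_le_one₀ (div_nonneg hc hlc.le) ((div_le_one hlc).2 (by linarith))
  calc (l * e / (l + c) - e) ^ 2 = (c / (l + c)) ^ 2 * e ^ 2 := by rw [hshrink]; ring
    _ ≤ 1 * e ^ 2 := by gcongr
    _ = e ^ 2 := one_mul _

lemma tendsto_mul_div_add_div_natCast {l : ℝ} (hl : l ≠ 0) (s e : ℝ) :
    Tendsto (fun N : ℕ => l * e / (l + s / N)) atTop (𝓝 e) := by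
  have hden : Tendsto (fun N : ℕ => l + s / N) atTop (𝓝 l) := by
    simpa using tendsto_const_nhds.add (tendsto_const_div_atTop_nhds_zero_nat s)
  simpa only [mul_div_cancel_left₀ e hl, Pi.div_def] using
    (tendsto_const_nhds (x := l * e)).div hden hl

theorem stmt_3_general (sigma : ℝ)
    (lam : ℕ → ℝ) (hlam : ∀ t, 0 < lam t)
    (eta : ℕ → ℝ) (heta : Summable (fun t => (eta t) ^ 2))
    (H : ℕ → ℕ → ℝ)
    (hH : ∀ N : ℕ, 0 < N → ∀ t, H N t = lam t * eta t / (lam t + sigma ^ 2 / N)) :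
    (∀ N : ℕ, 0 < N → Summable (fun t => (H N t - eta t) ^ 2)) ∧
    Filter.Tendsto (fun N : ℕ => ∑' t, (H N t - eta t) ^ 2)
      Filter.atTop (nhds 0) := by
  have hdom : ∀ N : ℕ, 0 < N → ∀ t, (H N t - eta t) ^ 2 ≤ eta t ^ 2 := fun N hN t => by
    rw [hH N hN t]
    exact mul_div_add_sub_sq_le (hlam t).le (by positivity) (eta t)
  refine ⟨fun N hN => heta.of_nonneg_of_le (fun t => sq_nonneg _) (hdom N hN), ?_⟩
  have hpointwise : ∀ t, Tendsto (fun N : ℕ => (H N t - eta t) ^ 2) atTop (𝓝 0) := fun t => by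
    have hHt : Tendsto (fun N : ℕ => H N t) atTop (𝓝 (eta t)) :=
      (tendsto_mul_div_add_div_natCast (hlam t).ne' _ _).congr'
        (eventually_atTop.2 ⟨1, fun N hN => (hH N hN t).symm⟩)
    simpa using (hHt.sub_const (eta t)).pow 2
  have hbound : ∀ᶠ N in atTop, ∀ t, ‖(H N t - eta t) ^ 2‖ ≤ eta t ^ 2 :=
    eventually_atTop.2 ⟨1, fun N hN t => by
      rw [Real.norm_of_nonneg (sq_nonneg _)]
      exact hdom N hN t⟩
  simpa using tendsto_tsum_of_dominated_convergence heta hpointwise hbound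

/-- The GPR prediction converges to the true interaction function in the ℓ² sense:
with `H_N(t) = λ_t·η_t/(λ_t + σ²/N)`, the series `Σ_t (H_N(t) − η_t)²` converges for
every `N ≥ 1` and tends to `0` as `N → ∞`. -/
theorem stmt_3 (sigma : ℝ) (hsigma : 0 < sigma)
    (lam : ℕ → ℝ) (hlam : ∀ t, 0 < lam t)
    (eta : ℕ → ℝ) (heta : Summable (fun t => (eta t) ^ 2))
    (H : ℕ → ℕ → ℝ)
    (hH : ∀ N : ℕ, 0 < N → ∀ t, H N t = lam t * eta t / (lam t + sigma ^ 2 / N)) :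
    (∀ N : ℕ, 0 < N → Summable (fun t => (H N t - eta t) ^ 2)) ∧
    Filter.Tendsto (fun N : ℕ => ∑' t, (H N t - eta t) ^ 2)
      Filter.atTop (nhds 0) :=
  stmt_3_general sigma lam hlam eta heta H hH
end

section
/- Let M be a positive integer, let A be an invertible M×M real matrix, let i be an index in {1, …, M}, let d ∈ ℝ^M, and let e denote the i-th standard basis vector of ℝ^M. Define the M×2 matrices U = [ e, (I − (1/2)·e eᵀ)·d ] and V = [ (I − (1/2)·e eᵀ)·d, e ], and assume the 2×2 matrix I₂ + Vᵀ A⁻¹ U is invertible. Then the matrix A' = A + e·dᵀ + d·eᵀ − d_i·e·eᵀ is invertible, and A'⁻¹ = A⁻¹ − A⁻¹ U (I₂ + Vᵀ A⁻¹ U)⁻¹ Vᵀ A⁻¹. -/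
open Matrix

/-!
Replacing the `i`-th data point changes the `i`-th row and column of the Gram matrix by `d`,
and with `w = d - (dᵢ/2) e` this change is the symmetric rank-two matrix `e wᵀ + w eᵀ = U Vᵀ`:
halving `dᵢ` in `w` makes the diagonal entry `(i, i)`, which both terms hit, change by exactly `dᵢ`.
The claim is then the Woodbury identity for `A + U Vᵀ`.
-/

section Woodbury

variable {n m α : Type*} [Fintype n] [DecidableEq n] [Fintype m] [DecidableEq m] [CommRing α]
  {A : Matrix n n α} {U : Matrix n m α} {V : Matrix m n α}

theorem isUnit_add_mul (hA : IsUnit A) (hAUV : IsUnit (1 + V * A⁻¹ * U)) :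
    IsUnit (A + U * V) := by
  obtain ⟨_⟩ := hA.nonempty_invertible
  obtain ⟨iAUV⟩ := hAUV.nonempty_invertible
  let : Invertible (1 : Matrix m m α) := invertibleOne
  rw [← invOf_eq_nonsing_inv, ← invOf_one] at iAUV
  rw [← Matrix.mul_one U]
  exact @isUnit_of_invertible _ _ _ (invertibleAddMulMul A U 1 V)

theorem add_mul_inv_eq_sub (hA : IsUnit A) (hAUV : IsUnit (1 + V * A⁻¹ * U)) :
    (A + U * V)⁻¹ = A⁻¹ - A⁻¹ * U * (1 + V * A⁻¹ * U)⁻¹ * V * A⁻¹ := by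
  simpa only [Matrix.mul_one, inv_one] using
    add_mul_mul_inv_eq_sub A U 1 V hA isUnit_one (by rwa [inv_one])

end Woodbury

section RankTwo

variable {n α : Type*} [CommRing α]

theorem one_sub_smul_vecMulVec_mulVec [Fintype n] [DecidableEq n] (c : α) (e d : n → α) :
    (1 - c • vecMulVec e e) *ᵥ d = d - (c * (e ⬝ᵥ d)) • e := by
  rw [sub_mulVec, one_mulVec, smul_mulVec, vecMulVec_mulVec, op_smul_eq_smul, smul_smul]

theorem vecMulVec_sub_smul_add_vecMulVec_sub_smul (c : α) (e d : n → α) :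
    vecMulVec e (d - c • e) + vecMulVec (d - c • e) e =
      vecMulVec e d + vecMulVec d e - (2 * c) • vecMulVec e e := by
  rw [vecMulVec_sub, sub_vecMulVec, vecMulVec_smul, smul_vecMulVec, two_mul, add_smul]
  abel

theorem of_ite_mul_transpose_of_ite (a b c f : n → α) :
    (of fun j (k : Fin 2) => if k = 0 then a j else b j) *
        (of fun j (k : Fin 2) => if k = 0 then c j else f j)ᵀ =
      vecMulVec a c + vecMulVec b f := by
  ext j l
  simp [mul_apply, Fin.sum_univ_two, vecMulVec_apply]

end RankTwo

theorem stmt_7_general (M : ℕ)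
    (A : Matrix (Fin M) (Fin M) ℝ) (hA : IsUnit A)
    (i : Fin M) (d : Fin M → ℝ)
    (e : Fin M → ℝ) (he : e = Pi.single i (1 : ℝ))
    (w : Fin M → ℝ)
    (hw : w = ((1 : Matrix (Fin M) (Fin M) ℝ)
                - (1 / 2 : ℝ) • Matrix.vecMulVec e e).mulVec d)
    (U V : Matrix (Fin M) (Fin 2) ℝ)
    (hU : U = Matrix.of fun j k => if k = 0 then e j else w j)
    (hV : V = Matrix.of fun j k => if k = 0 then w j else e j)
    (hsmall : IsUnit ((1 : Matrix (Fin 2) (Fin 2) ℝ) + Vᵀ * A⁻¹ * U))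
    (A' : Matrix (Fin M) (Fin M) ℝ)
    (hA' : A' = A + Matrix.vecMulVec e d + Matrix.vecMulVec d e
      - d i • Matrix.vecMulVec e e) :
    IsUnit A' ∧
    A'⁻¹ = A⁻¹ - A⁻¹ * U *
      ((1 : Matrix (Fin 2) (Fin 2) ℝ) + Vᵀ * A⁻¹ * U)⁻¹ * Vᵀ * A⁻¹ := by
  have hed : e ⬝ᵥ d = d i := he ▸ single_one_dotProduct i d
  have hw' : w = d - (1 / 2 * d i) • e := by
    rw [hw, one_sub_smul_vecMulVec_mulVec, hed]
  have hA'UV : A' = A + U * Vᵀ := by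
    rw [hA', hU, hV, of_ite_mul_transpose_of_ite, hw',
      vecMulVec_sub_smul_add_vecMulVec_sub_smul, show (2 : ℝ) * (1 / 2 * d i) = d i by ring]
    abel
  rw [hA'UV]
  exact ⟨isUnit_add_mul hA hsmall, add_mul_inv_eq_sub hA hsmall⟩

/-- Correctness of the FO-GPR selective-forgetting update (Sherman–Morrison–Woodbury):
if `A` is invertible and `I₂ + VᵀA⁻¹U` is invertible, then
`A' = A + e·dᵀ + d·eᵀ − d_i·e·eᵀ` is invertible with
`A'⁻¹ = A⁻¹ − A⁻¹U(I₂ + VᵀA⁻¹U)⁻¹VᵀA⁻¹`. -/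
theorem stmt_7 (M : ℕ) (hM : 0 < M)
    (A : Matrix (Fin M) (Fin M) ℝ) (hA : IsUnit A)
    (i : Fin M) (d : Fin M → ℝ)
    (e : Fin M → ℝ) (he : e = Pi.single i (1 : ℝ))
    (w : Fin M → ℝ)
    (hw : w = ((1 : Matrix (Fin M) (Fin M) ℝ)
                - (1 / 2 : ℝ) • Matrix.vecMulVec e e).mulVec d)
    (U V : Matrix (Fin M) (Fin 2) ℝ)
    (hU : U = Matrix.of fun j k => if k = 0 then e j else w j)
    (hV : V = Matrix.of fun j k => if k = 0 then w j else e j)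
    (hsmall : IsUnit ((1 : Matrix (Fin 2) (Fin 2) ℝ) + Vᵀ * A⁻¹ * U))
    (A' : Matrix (Fin M) (Fin M) ℝ)
    (hA' : A' = A + Matrix.vecMulVec e d + Matrix.vecMulVec d e
      - d i • Matrix.vecMulVec e e) :
    IsUnit A' ∧
    A'⁻¹ = A⁻¹ - A⁻¹ * U *
      ((1 : Matrix (Fin 2) (Fin 2) ℝ) + Vᵀ * A⁻¹ * U)⁻¹ * Vᵀ * A⁻¹ :=
  stmt_7_general M A hA i d e he w hw U V hU hV hsmall A' hA'
end
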